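/- Let G be a finite simple graph without isolated vertices. For a vertex 𝔸 = (A′₀ ⊎ A″₀ ⊂ ⋯ ⊂ A′_k ⊎ A″_k) of sd B₁(G), the sets CN(CN(A′₀)), …, CN(CN(A′_k)), CN(A″_k), …, CN(A″₀) are closed and nonempty and satisfy CN(CN(A′₀)) ⊆ ⋯ ⊆ CN(CN(A′_k)) ⊆ CN(A″_k) ⊆ ⋯ ⊆ CN(A″₀); the map sending 𝔸 to the chain obtained from this sequence by omitting repetitions (a vertex of sd L(G)) is a simplicial ℤ₂-map sd B₁(G) → sd L(G). -/

import Mathlib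

/-! `CN` is the antitone Galois connection of the adjacency relation with itself, so every
`CN(X)` is closed and `CN ∘ CN` is a closure operator. For `A' ⊎ A''` in `B₁(G)`,
`A'' ⊆ CN(A')`, which gives `CN(CN(A')) ⊆ CN(A'')`; both sets are nonempty (they contain `A'`)
and proper (they miss a vertex of `A''`, as `G` has no loops). Along a chain of `B₁(G)` the
first family increases and the second decreases, so together they form one chain, and swapping
the shores interchanges them since `CN(CN(CN(A))) = CN(A)`. -/

open Finset

attribute [local instance] Classical.propDecidable

noncomputable section

variable {V : Type*}

/-- The set `CN(A)` of common neighbors of `A` in `G` (so `CN(∅) = V`). -/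
def CN [Fintype V] (G : SimpleGraph V) (A : Finset V) : Finset V :=
  Finset.univ.filter fun v => ∀ a ∈ A, G.Adj a v

/-- The shore of `S ⊆ V × {1,2}` lying over `b` (with `false` for the first copy of `V`
and `true` for the second). -/
def shore (S : Finset (V × Bool)) (b : Bool) : Finset V :=
  (S.filter fun p => p.2 = b).image Prod.fst

/-- `A' ⊎ A'' := (A' × {1}) ∪ (A'' × {2})`, with `false` for `1` and `true` for `2`. -/
def joinPair (A' A'' : Finset V) : Finset (V × Bool) :=
  A'.image (fun v => (v, false)) ∪ A''.image (fun v => (v, true))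

/-- The ℤ₂-action on subsets of `V × {1,2}`: interchange the two copies of `V`,
i.e. `A' ⊎ A'' ↦ A'' ⊎ A'`. -/
def swapFinset (S : Finset (V × Bool)) : Finset (V × Bool) :=
  S.image fun p => (p.1, !p.2)

/-- `G[A', A'']` is complete: every vertex of `A'` is adjacent to every vertex of `A''`. -/
def IsCompleteBip (G : SimpleGraph V) (A' A'' : Finset V) : Prop :=
  ∀ a ∈ A', ∀ b ∈ A'', G.Adj a b

/-- Simplices of the box complex `B(G)`: sets `A' ⊎ A''` with `A'`, `A''` disjoint,
`G[A', A'']` complete and `CN(A') ≠ ∅ ≠ CN(A'')`. -/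
def BoxSimplex [Fintype V] (G : SimpleGraph V) (S : Finset (V × Bool)) : Prop :=
  Disjoint (shore S false) (shore S true) ∧
  IsCompleteBip G (shore S false) (shore S true) ∧
  (CN G (shore S false)).Nonempty ∧ (CN G (shore S true)).Nonempty

/-- Simplices of the box complex `B₀(G)`: sets `A' ⊎ A''` with `A'`, `A''` disjoint and
`G[A', A'']` complete. -/
def Box0Simplex (G : SimpleGraph V) (S : Finset (V × Bool)) : Prop :=
  Disjoint (shore S false) (shore S true) ∧
  IsCompleteBip G (shore S false) (shore S true)

/-- Vertices of `B₁(G)`: sets `A' ⊎ A''` with `A'`, `A''` nonempty, disjoint and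
`G[A', A'']` complete. -/
def B1Vertex (G : SimpleGraph V) (S : Finset (V × Bool)) : Prop :=
  (shore S false).Nonempty ∧ (shore S true).Nonempty ∧
  Disjoint (shore S false) (shore S true) ∧
  IsCompleteBip G (shore S false) (shore S true)

/-- Simplices of the order complex `B₁(G)`: chains of vertices of `B₁(G)` under inclusion. -/
def B1Simplex (G : SimpleGraph V) (C : Finset (Finset (V × Bool))) : Prop :=
  (∀ T ∈ C, B1Vertex G T) ∧ IsChain (· ⊆ ·) (C : Set (Finset (V × Bool)))

/-- Simplices of the barycentric subdivision `sd K` of the complex `K` whose simplices are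
given by the predicate `P`: chains of nonempty simplices of `K` under inclusion. -/
def sdSimplex {γ : Type*} (P : Finset γ → Prop) (C : Finset (Finset γ)) : Prop :=
  (∀ S ∈ C, P S ∧ S.Nonempty) ∧ IsChain (· ⊆ ·) (C : Set (Finset γ))

/-- Vertices of the Lovász complex `L(G)`: nonempty proper closed subsets of `V`. -/
def LVertex [Fintype V] (G : SimpleGraph V) (A : Finset V) : Prop :=
  A.Nonempty ∧ A ≠ Finset.univ ∧ CN G (CN G A) = A

/-- Simplices of the Lovász complex `L(G)`: chains of closed sets under inclusion. -/
def LSimplex [Fintype V] (G : SimpleGraph V) (C : Finset (Finset V)) : Prop :=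
  (∀ A ∈ C, LVertex G A) ∧ IsChain (· ⊆ ·) (C : Set (Finset V))

/-- The map sending a chain `𝔸 = (A'₀ ⊎ A''₀ ⊂ ⋯ ⊂ A'_k ⊎ A''_k)` of vertices of `B₁(G)`
to the chain `CN(CN(A'₀)) ⊆ ⋯ ⊆ CN(CN(A'_k)) ⊆ CN(A''_k) ⊆ ⋯ ⊆ CN(A''₀)`, with
repetitions omitted (a set of sets). -/
def closedChain [Fintype V] (G : SimpleGraph V) (𝔸 : Finset (Finset (V × Bool))) :
    Finset (Finset V) :=
  𝔸.image (fun T => CN G (CN G (shore T false))) ∪ 𝔸.image (fun T => CN G (shore T true))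

section CommonNeighbors

variable [Fintype V] (G : SimpleGraph V)

lemma mem_CN {A : Finset V} {v : V} : v ∈ CN G A ↔ ∀ a ∈ A, G.Adj a v := by
  simp [CN]

lemma CN_anti {A B : Finset V} (h : A ⊆ B) : CN G B ⊆ CN G A :=
  fun _ hv => (mem_CN G).2 fun a ha => (mem_CN G).1 hv a (h ha)

lemma CN_CN_mono {A B : Finset V} (h : A ⊆ B) : CN G (CN G A) ⊆ CN G (CN G B) :=
  CN_anti G (CN_anti G h)

lemma subset_CN_CN (A : Finset V) : A ⊆ CN G (CN G A) :=
  fun v hv => (mem_CN G).2 fun _ ha => ((mem_CN G).1 ha v hv).symm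

lemma CN_CN_CN (A : Finset V) : CN G (CN G (CN G A)) = CN G A :=
  (CN_anti G (subset_CN_CN G A)).antisymm (subset_CN_CN G (CN G A))

lemma notMem_CN_of_mem {A : Finset V} {b : V} (hb : b ∈ A) : b ∉ CN G A :=
  fun h => G.irrefl ((mem_CN G).1 h b hb)

end CommonNeighbors

lemma shore_mono {S T : Finset (V × Bool)} (h : S ⊆ T) (b : Bool) :
    shore S b ⊆ shore T b :=
  image_subset_image (filter_subset_filter _ h)

lemma shore_swapFinset (S : Finset (V × Bool)) (b : Bool) :
    shore (swapFinset S) b = shore S (!b) := by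
  ext v
  simp only [shore, swapFinset, mem_image, mem_filter]
  constructor
  · rintro ⟨_, ⟨⟨q, hq, rfl⟩, hb⟩, rfl⟩
    exact ⟨q, ⟨hq, by simp [← hb]⟩, rfl⟩
  · rintro ⟨q, ⟨hq, hb⟩, rfl⟩
    exact ⟨(q.1, !q.2), ⟨⟨q, hq, rfl⟩, by simp [hb]⟩, rfl⟩

namespace B1Vertex

variable [Fintype V] {G : SimpleGraph V} {T : Finset (V × Bool)}

lemma snd_subset_CN_fst (h : B1Vertex G T) : shore T true ⊆ CN G (shore T false) :=
  fun b hb => (mem_CN G).2 fun a ha => h.2.2.2 a ha b hb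

lemma fst_subset_CN_snd (h : B1Vertex G T) : shore T false ⊆ CN G (shore T true) :=
  fun a ha => (mem_CN G).2 fun b hb => (h.2.2.2 a ha b hb).symm

lemma CN_CN_fst_subset_CN_snd (h : B1Vertex G T) :
    CN G (CN G (shore T false)) ⊆ CN G (shore T true) :=
  CN_anti G h.snd_subset_CN_fst

lemma lVertex_CN_CN_fst (h : B1Vertex G T) : LVertex G (CN G (CN G (shore T false))) := by
  obtain ⟨b, hb⟩ := h.2.1
  refine ⟨h.1.mono (subset_CN_CN G _), fun huniv => ?_, CN_CN_CN G _⟩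
  exact notMem_CN_of_mem G hb (h.CN_CN_fst_subset_CN_snd (huniv ▸ mem_univ b))

lemma lVertex_CN_snd (h : B1Vertex G T) : LVertex G (CN G (shore T true)) := by
  obtain ⟨b, hb⟩ := h.2.1
  refine ⟨h.1.mono h.fst_subset_CN_snd, fun huniv => ?_, CN_CN_CN G _⟩
  exact notMem_CN_of_mem G hb (huniv ▸ mem_univ b)

end B1Vertex

lemma IsChain.image_union_image_of_le {α β : Type*} [Preorder α] [Preorder β] {s : Set α}
    (hs : IsChain (· ≤ ·) s) {f g : α → β} (hf : Monotone f) (hg : Antitone g)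
    (hfg : ∀ x ∈ s, ∀ y ∈ s, f x ≤ g y) :
    IsChain (· ≤ ·) (f '' s ∪ g '' s) := by
  rintro _ (⟨x, hx, rfl⟩ | ⟨x, hx, rfl⟩) _ (⟨y, hy, rfl⟩ | ⟨y, hy, rfl⟩) -
  · exact (hs.total hx hy).imp (fun h => hf h) (fun h => hf h)
  · exact Or.inl (hfg x hx y hy)
  · exact Or.inr (hfg y hy x hx)
  · exact (hs.total hx hy).symm.imp (fun h => hg h) (fun h => hg h)

lemma closedChain_mono [Fintype V] (G : SimpleGraph V) {𝔸 𝔹 : Finset (Finset (V × Bool))}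
    (h : 𝔸 ⊆ 𝔹) : closedChain G 𝔸 ⊆ closedChain G 𝔹 :=
  union_subset_union (image_subset_image h) (image_subset_image h)

lemma closedChain_nonempty [Fintype V] (G : SimpleGraph V) {𝔸 : Finset (Finset (V × Bool))}
    (h𝔸 : 𝔸.Nonempty) : (closedChain G 𝔸).Nonempty :=
  (h𝔸.image _).mono subset_union_left

lemma closedChain_image_swapFinset [Fintype V] (G : SimpleGraph V)
    (𝔸 : Finset (Finset (V × Bool))) :
    closedChain G (𝔸.image swapFinset) = (closedChain G 𝔸).image (CN G) := by
  simp only [closedChain, image_union, image_image, Function.comp_def, shore_swapFinset,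
    CN_CN_CN, Bool.not_false, Bool.not_true]
  exact union_comm _ _

namespace B1Simplex

variable [Fintype V] {G : SimpleGraph V} {𝔸 : Finset (Finset (V × Bool))}

lemma CN_CN_fst_subset_CN_snd (h𝔸 : B1Simplex G 𝔸) {T T' : Finset (V × Bool)}
    (hT : T ∈ 𝔸) (hT' : T' ∈ 𝔸) : CN G (CN G (shore T false)) ⊆ CN G (shore T' true) := by
  rcases h𝔸.2.total hT hT' with h | h
  · exact (CN_CN_mono G (shore_mono h false)).trans (h𝔸.1 T' hT').CN_CN_fst_subset_CN_snd
  · exact (h𝔸.1 T hT).CN_CN_fst_subset_CN_snd.trans (CN_anti G (shore_mono h true))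

lemma lVertex_of_mem_closedChain (h𝔸 : B1Simplex G 𝔸) {A : Finset V}
    (hA : A ∈ closedChain G 𝔸) : LVertex G A := by
  rcases mem_union.1 hA with hA | hA <;> obtain ⟨T, hT, rfl⟩ := mem_image.1 hA
  · exact (h𝔸.1 T hT).lVertex_CN_CN_fst
  · exact (h𝔸.1 T hT).lVertex_CN_snd

lemma lSimplex_closedChain (h𝔸 : B1Simplex G 𝔸) : LSimplex G (closedChain G 𝔸) := by
  refine ⟨fun _ => h𝔸.lVertex_of_mem_closedChain, ?_⟩
  simp only [closedChain, coe_union, coe_image]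
  exact h𝔸.2.image_union_image_of_le (fun _ _ h => CN_CN_mono G (shore_mono h false))
    (fun _ _ h => CN_anti G (shore_mono h true)) fun _ hT _ hT' =>
      h𝔸.CN_CN_fst_subset_CN_snd hT hT'

end B1Simplex

lemma sdSimplex_image_closedChain [Fintype V] (G : SimpleGraph V)
    {𝒞 : Finset (Finset (Finset (V × Bool)))} (h𝒞 : sdSimplex (B1Simplex G) 𝒞) :
    sdSimplex (LSimplex G) (𝒞.image (closedChain G)) := by
  refine ⟨?_, ?_⟩
  · simp only [mem_image, forall_exists_index, and_imp, forall_apply_eq_imp_iff₂]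
    exact fun 𝔸 h𝔸 => ⟨(h𝒞.1 𝔸 h𝔸).1.lSimplex_closedChain,
      closedChain_nonempty G (h𝒞.1 𝔸 h𝔸).2⟩
  · rw [coe_image]
    exact h𝒞.2.image_of_map_rel _ _ _ fun _ _ h => closedChain_mono G h

theorem sd_B1_to_sd_Lovasz_general [Fintype V] (G : SimpleGraph V) :
    (∀ 𝔸 : Finset (Finset (V × Bool)), 𝔸.Nonempty → B1Simplex G 𝔸 →
      (∀ A ∈ closedChain G 𝔸, LVertex G A) ∧
      (∀ T ∈ 𝔸, ∀ T' ∈ 𝔸, T ⊆ T' →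
        CN G (CN G (shore T false)) ⊆ CN G (CN G (shore T' false)) ∧
        CN G (shore T' true) ⊆ CN G (shore T true)) ∧
      (∀ T ∈ 𝔸, ∀ T' ∈ 𝔸, CN G (CN G (shore T false)) ⊆ CN G (shore T' true)) ∧
      (closedChain G 𝔸).Nonempty ∧ LSimplex G (closedChain G 𝔸)) ∧
    (∀ 𝒞 : Finset (Finset (Finset (V × Bool))), sdSimplex (B1Simplex G) 𝒞 →
      sdSimplex (LSimplex G) (𝒞.image (closedChain G))) ∧
    (∀ 𝔸 : Finset (Finset (V × Bool)), 𝔸.Nonempty → B1Simplex G 𝔸 →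
      closedChain G (𝔸.image swapFinset) = (closedChain G 𝔸).image (CN G)) :=
  ⟨fun _ h𝔸 hB =>
    ⟨fun _ => hB.lVertex_of_mem_closedChain,
      fun _ _ _ _ h => ⟨CN_CN_mono G (shore_mono h false), CN_anti G (shore_mono h true)⟩,
      fun _ hT _ hT' => hB.CN_CN_fst_subset_CN_snd hT hT',
      closedChain_nonempty G h𝔸, hB.lSimplex_closedChain⟩,
    fun _ => sdSimplex_image_closedChain G,
    fun 𝔸 _ _ => closedChain_image_swapFinset G 𝔸⟩

/-- For a vertex `𝔸` of `sd B₁(G)` the sets `CN(CN(A'_i))` and `CN(A''_i)` are closed,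
nonempty and form a chain as displayed, and `𝔸 ↦ closedChain G 𝔸` is a simplicial
ℤ₂-map `sd B₁(G) → sd L(G)`. -/
theorem sd_B1_to_sd_Lovasz [Fintype V] (G : SimpleGraph V) (hiso : ∀ v : V, ∃ u, G.Adj v u) :
    (∀ 𝔸 : Finset (Finset (V × Bool)), 𝔸.Nonempty → B1Simplex G 𝔸 →
      (∀ A ∈ closedChain G 𝔸, LVertex G A) ∧
      (∀ T ∈ 𝔸, ∀ T' ∈ 𝔸, T ⊆ T' →
        CN G (CN G (shore T false)) ⊆ CN G (CN G (shore T' false)) ∧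
        CN G (shore T' true) ⊆ CN G (shore T true)) ∧
      (∀ T ∈ 𝔸, ∀ T' ∈ 𝔸, CN G (CN G (shore T false)) ⊆ CN G (shore T' true)) ∧
      (closedChain G 𝔸).Nonempty ∧ LSimplex G (closedChain G 𝔸)) ∧
    (∀ 𝒞 : Finset (Finset (Finset (V × Bool))), sdSimplex (B1Simplex G) 𝒞 →
      sdSimplex (LSimplex G) (𝒞.image (closedChain G))) ∧
    (∀ 𝔸 : Finset (Finset (V × Bool)), 𝔸.Nonempty → B1Simplex G 𝔸 →
      closedChain G (𝔸.image swapFinset) = (closedChain G 𝔸).image (CN G)) :=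
  sd_B1_to_sd_Lovasz_general G
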